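/- Let W' be a discrete valuation ring with uniformizer p and fraction field W'_Q, let N' be a 4-dimensional W'_Q-vector space with a fixed full-rank lattice M, and define the height of a lattice A ⊆ N' as the integer i with ⋀^4 A = p^i ⋀^4 M inside ⋀^4 N'. Define a bilinear form on V' = ⋀^2 N' by [x,y]ω = x∧y for a generator ω of ⋀^4 M. Then for a lattice A ⊆ N' of height 2i and an integer m, the lattice p^m ⋀^2 A ⊆ V' is self-dual with respect to [·,·] if and only if m = -i. -/

import Mathlib

/-!
STATEMENT 7: Let `W'` be a DVR with uniformizer `π` and fraction field `K`, let `N'` be a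
4-dimensional `K`-vector space with a fixed full lattice `M`, and define the height of a
lattice `A ⊆ N'` as the integer `i` with `⋀⁴ A = π^i ⋀⁴ M`.  Define a bilinear form on
`V' = ⋀² N'` by `[x,y] ω = x ∧ y` for a generator `ω` of `⋀⁴ M`.  Then for a lattice
`A ⊆ N'` of height `2i` and an integer `m`, the lattice `π^m ⋀² A ⊆ V'` is self-dual with
respect to `[·,·]` if and only if `m = -i`.
-/

/-- The wedge `a ∧ b` as an element of the second exterior power. -/
noncomputable def wedge2 (K : Type*) [Field K] (N : Type*) [AddCommGroup N] [Module K N]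
    (a b : N) : ⋀[K]^2 N :=
  ⟨ExteriorAlgebra.ιMulti K 2 ![a, b], ExteriorAlgebra.ιMulti_range K 2 ⟨![a, b], rfl⟩⟩

/-- The wedge `a ∧ b ∧ c ∧ d` as an element of the fourth exterior power. -/
noncomputable def wedge4 (K : Type*) [Field K] (N : Type*) [AddCommGroup N] [Module K N]
    (a b c d : N) : ⋀[K]^4 N :=
  ⟨ExteriorAlgebra.ιMulti K 4 ![a, b, c, d],
    ExteriorAlgebra.ιMulti_range K 4 ⟨![a, b, c, d], rfl⟩⟩

/-- `⋀² A` for a `W'`-submodule `A ⊆ N`. -/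
noncomputable def lambda2 (W' K : Type*) [CommRing W'] [Field K] [Algebra W' K]
    (N : Type*) [AddCommGroup N] [Module K N] [Module W' N] [IsScalarTower W' K N]
    (A : Submodule W' N) : Submodule W' (⋀[K]^2 N) :=
  Submodule.span W' {w : ⋀[K]^2 N | ∃ a ∈ A, ∃ b ∈ A, w = wedge2 K N a b}

/-- `⋀⁴ A` for a `W'`-submodule `A ⊆ N`. -/
noncomputable def lambda4 (W' K : Type*) [CommRing W'] [Field K] [Algebra W' K]
    (N : Type*) [AddCommGroup N] [Module K N] [Module W' N] [IsScalarTower W' K N]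
    (A : Submodule W' N) : Submodule W' (⋀[K]^4 N) :=
  Submodule.span W'
    {w : ⋀[K]^4 N | ∃ a ∈ A, ∃ b ∈ A, ∃ c ∈ A, ∃ d ∈ A, w = wedge4 K N a b c d}

/-- Scaling a `W'`-submodule of a `K`-vector space by a scalar `c : K`. -/
noncomputable def scaleSub (W' K : Type*) [CommRing W'] [Field K] [Algebra W' K]
    (V : Type*) [AddCommGroup V] [Module K V] [Module W' V] [IsScalarTower W' K V]
    (c : K) (L : Submodule W' V) : Submodule W' V :=
  Submodule.map (LinearMap.restrictScalars W' (c • (LinearMap.id : V →ₗ[K] V))) L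

/-!
Choose a `W'`-basis `e` of `A`; it is also a `K`-basis of `N'`. The wedges `e_s`, `s` running over
the 2-subsets of `{0,1,2,3}`, form a `W'`-basis of `⋀² A`, and `⋀⁴ A` is generated by
`Ω = e₀ ∧ e₁ ∧ e₂ ∧ e₃`. The height condition gives `Ω = u π^{2i} ω` with `u` a unit, so
`[e_s, e_t]` vanishes unless `t` is the complement of `s`, where it is `± u π^{2i}`. Hence the
dual of `π^m ⋀² A` is `π^{-m-2i} ⋀² A`, and the two agree iff `π^{2m+2i}` is a unit, i.e. `m = -i`.
-/

open Module Submodule Set Set.powersetCard LinearMap.BilinForm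
open scoped Pointwise

section Lattice

variable {W K N : Type*} [CommRing W] [IsDomain W] [IsPrincipalIdealRing W] [Field K]
  [Algebra W K] [IsFractionRing W K] [AddCommGroup N] [Module K N] [Module W N]
  [IsScalarTower W K N]

theorem exists_basis_span_eq_of_isLattice {n : ℕ} (hn : finrank K N = n) (A : Submodule W N)
    [A.IsLattice K] : ∃ b : Basis (Fin n) K N, span W (range b) = A := by
  let bA := Free.chooseBasis W A
  let bK := bA.extendOfIsLattice K
  have hrange : range bK = A.subtype '' range bA := by
    rw [← range_comp]; ext; simp [bK]
  refine ⟨bK.reindex (Fintype.equivFinOfCardEq (hn ▸ (finrank_eq_card_basis bK).symm)), ?_⟩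
  rw [Basis.range_reindex, hrange, span_image, bA.span_eq, Submodule.map_top, range_subtype]

end Lattice

section ExteriorPower

variable {R S N : Type*} [CommRing R] [CommRing S] [Algebra R S] [AddCommGroup N] [Module S N]
  [Module R N] [IsScalarTower R S N]

/-- Proof: transport `exteriorPower.ιMulti_family_span_of_span` along the `R`-linear map
`⋀ⁿ_R (span R (range b)) → ⋀ⁿ_S N`. -/
theorem span_ιMulti_image_pi_span_range {I : Type*} [LinearOrder I] (n : ℕ) (b : I → N) :
    span R (exteriorPower.ιMulti S n '' univ.pi fun _ => (span R (range b) : Set N)) =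
      span R (range (exteriorPower.ιMulti_family S n b)) := by
  set A := span R (range b)
  let bA : I → A := fun i => ⟨b i, subset_span ⟨i, rfl⟩⟩
  have hbA : span R (range bA) = ⊤ := by
    apply map_injective_of_injective A.injective_subtype
    rw [map_span, ← range_comp, Submodule.map_top, range_subtype]
    rfl
  let φ : A [⋀^Fin n]→ₗ[R] ⋀[S]^n N :=
    { ((exteriorPower.ιMulti S n).toMultilinearMap.restrictScalars R).compLinearMap
        fun _ => A.subtype with
      map_eq_zero_of_eq' := fun v i j h hij =>
        (exteriorPower.ιMulti S n).map_eq_zero_of_eq _ (by simp [h]) hij }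
  let ψ := exteriorPower.alternatingMapLinearEquiv φ
  have hψ (f : Fin n → A) :
      ψ (exteriorPower.ιMulti R n f) = exteriorPower.ιMulti S n (A.subtype ∘ f) :=
    exteriorPower.alternatingMapLinearEquiv_apply_ιMulti φ f
  have hpi : exteriorPower.ιMulti S n '' univ.pi (fun _ => (A : Set N)) =
      ψ '' range (exteriorPower.ιMulti R n) := by
    rw [← range_comp]
    ext x
    constructor
    · rintro ⟨f, hf, rfl⟩
      exact ⟨fun j => ⟨f j, hf j trivial⟩, hψ _⟩
    · rintro ⟨f, rfl⟩
      exact ⟨A.subtype ∘ f, fun j _ => (f j).2, (hψ f).symm⟩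
  rw [hpi, ← map_span, exteriorPower.ιMulti_span,
    ← exteriorPower.ιMulti_family_span_of_span R hbA, map_span, ← range_comp]
  congr 2
  ext s
  rw [Function.comp_apply, exteriorPower.ιMulti_family, exteriorPower.ιMulti_family, hψ]
  rfl

end ExteriorPower

theorem powersetCard_subsingleton {α : Type*} [Fintype α] {k : ℕ} (hk : k = Fintype.card α) :
    Subsingleton (powersetCard α k) :=
  ⟨fun s t => Subtype.ext <| (Finset.eq_univ_of_card _ ((card_eq s).trans hk)).trans
    (Finset.eq_univ_of_card _ ((card_eq t).trans hk)).symm⟩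

section Lambda

variable {W K N : Type*} [CommRing W] [Field K] [Algebra W K] [AddCommGroup N] [Module K N]
  [Module W N] [IsScalarTower W K N]

theorem lambda2_span_range {I : Type*} [LinearOrder I] (b : I → N) :
    lambda2 W K N (span W (range b)) = span W (range (exteriorPower.ιMulti_family K 2 b)) := by
  rw [← span_ιMulti_image_pi_span_range, lambda2]
  congr 1
  ext w
  constructor
  · rintro ⟨x, hx, y, hy, rfl⟩
    refine ⟨![x, y], fun j _ => ?_, rfl⟩
    fin_cases j <;> assumption
  · rintro ⟨f, hf, rfl⟩
    refine ⟨f 0, hf 0 trivial, f 1, hf 1 trivial, Subtype.ext ?_⟩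
    simp only [wedge2, exteriorPower.ιMulti_apply_coe]
    congr 1
    ext j; fin_cases j <;> rfl

theorem lambda4_span_range {I : Type*} [LinearOrder I] (b : I → N) :
    lambda4 W K N (span W (range b)) = span W (range (exteriorPower.ιMulti_family K 4 b)) := by
  rw [← span_ιMulti_image_pi_span_range, lambda4]
  congr 1
  ext w
  constructor
  · rintro ⟨x, hx, y, hy, z, hz, t, ht, rfl⟩
    refine ⟨![x, y, z, t], fun j _ => ?_, rfl⟩
    fin_cases j <;> assumption
  · rintro ⟨f, hf, rfl⟩
    refine ⟨f 0, hf 0 trivial, f 1, hf 1 trivial, f 2, hf 2 trivial, f 3, hf 3 trivial,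
      Subtype.ext ?_⟩
    simp only [wedge4, exteriorPower.ιMulti_apply_coe]
    congr 1
    ext j; fin_cases j <;> rfl

theorem lambda4_span_basis {I : Type*} [LinearOrder I] [Fintype I] (hI : Fintype.card I = 4)
    (e : Basis I K N) (top : powersetCard I 4) :
    lambda4 W K N (span W (range e)) = span W {e.exteriorPower 4 top} := by
  let : Unique (powersetCard I 4) := @uniqueOfSubsingleton _ (powersetCard_subsingleton hI.symm) top
  rw [lambda4_span_range, ← exteriorPower.coe_basis, range_unique]
  rfl

end Lambda

section Wedge

variable {R N : Type*} [CommRing R] [AddCommGroup N] [Module R N] {I : Type*} [LinearOrder I]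
  [Fintype I] (b : Basis I R N) {n m : ℕ} (hnm : m + n = Fintype.card I)

theorem exteriorPower_basis_mul_eq_zero {s : powersetCard I n} {t : powersetCard I m}
    (ht : t ≠ compl hnm s) :
    (b.exteriorPower n s : ExteriorAlgebra R N) * b.exteriorPower m t = 0 := by
  rw [← ExteriorAlgebra.basis_eq_coe_basis, ← ExteriorAlgebra.basis_eq_coe_basis]
  refine ExteriorAlgebra.basis_mul_of_not_disjoint b s t fun hst => ht (Subtype.ext ?_)
  refine Finset.eq_of_subset_of_card_le (Finset.subset_compl_iff_disjoint_left.mpr hst) ?_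
  simp [Finset.card_compl]
  omega

/-- `top` is arbitrary: `powersetCard I (n + m)` is a singleton, and taking its element as a
parameter avoids transporting `univ` along `n + m = Fintype.card I`. -/
theorem exists_exteriorPower_basis_mul_compl (s : powersetCard I n)
    (top : powersetCard I (n + m)) : ∃ ε : ℤˣ,
    (b.exteriorPower n s : ExteriorAlgebra R N) * b.exteriorPower m (compl hnm s) =
      ε • (b.exteriorPower (n + m) top : ExteriorAlgebra R N) := by
  have hdisj : Disjoint s.val (compl hnm s).val := by
    rw [coe_compl]; exact disjoint_compl_right
  have htop : disjUnion hdisj = top := (powersetCard_subsingleton (by omega)).elim _ _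
  refine ⟨(permOfDisjoint hdisj).sign, ?_⟩
  rw [← ExteriorAlgebra.basis_eq_coe_basis, ← ExteriorAlgebra.basis_eq_coe_basis,
    ExteriorAlgebra.basis_mul_of_disjoint b s _ hdisj, htop, ExteriorAlgebra.basis_eq_coe_basis]

end Wedge

section WedgePairing

variable {W K N : Type*} [CommRing W] [Field K] [Algebra W K] [AddCommGroup N] [Module K N]
  {I : Type*} [LinearOrder I] (e : Basis I K N) {n : ℕ} {ω : ⋀[K]^(n + n) N}
  {top : powersetCard I (n + n)} {v : Wˣ} {q : K}

theorem ne_zero_of_exteriorPower_basis_eq_smul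
    (hΩ : e.exteriorPower (n + n) top = (algebraMap W K v * q) • ω) :
    (ω : ExteriorAlgebra K N) ≠ 0 := fun h =>
  (e.exteriorPower (n + n)).ne_zero top (by rw [hΩ, ZeroMemClass.coe_eq_zero.mp h, smul_zero])

variable [Fintype I] (hn : n + n = Fintype.card I) {B : LinearMap.BilinForm K (⋀[K]^n N)}

theorem bilinForm_exteriorPower_basis_eq_zero
    (hB : ∀ x y : ⋀[K]^n N, (x : ExteriorAlgebra K N) * y = B x y • (ω : ExteriorAlgebra K N))
    (hΩ : e.exteriorPower (n + n) top = (algebraMap W K v * q) • ω)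
    {s t : powersetCard I n} (ht : t ≠ compl hn s) :
    B (e.exteriorPower n s) (e.exteriorPower n t) = 0 := by
  apply smul_left_injective K (ne_zero_of_exteriorPower_basis_eq_smul e hΩ)
  dsimp only
  rw [← hB, exteriorPower_basis_mul_eq_zero e hn ht, zero_smul]

theorem exists_bilinForm_exteriorPower_basis_compl
    (hB : ∀ x y : ⋀[K]^n N, (x : ExteriorAlgebra K N) * y = B x y • (ω : ExteriorAlgebra K N))
    (hΩ : e.exteriorPower (n + n) top = (algebraMap W K v * q) • ω) (s : powersetCard I n) :
    ∃ u : Wˣ, B (e.exteriorPower n s) (e.exteriorPower n (compl hn s)) = algebraMap W K u * q := by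
  obtain ⟨ε, hε⟩ := exists_exteriorPower_basis_mul_compl e hn s top
  refine ⟨Units.map (Int.castRingHom W) ε * v,
    smul_left_injective K (ne_zero_of_exteriorPower_basis_eq_smul e hΩ) ?_⟩
  dsimp only
  rw [← hB, hε, hΩ, Submodule.coe_smul, Units.smul_def, ← Int.cast_smul_eq_zsmul K, smul_smul]
  simp [mul_assoc]

end WedgePairing

section Duality

variable {W K V : Type*} [CommRing W] [Field K] [Algebra W K] [AddCommGroup V] [Module K V]
  [Module W V] [IsScalarTower W K V]

theorem scaleSub_span (c : K) (s : Set V) : scaleSub W K V c (span W s) = span W (c • s) := by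
  rw [scaleSub, map_span]
  rfl

theorem mem_span_smul_iff {c : K} (hc : c ≠ 0) {s : Set V} {x : V} :
    x ∈ span W (c • s) ↔ c⁻¹ • x ∈ span W s := by
  rw [← scaleSub_span, scaleSub]
  constructor
  · rintro ⟨y, hy, rfl⟩
    simpa [smul_smul, inv_mul_cancel₀ hc] using hy
  · exact fun h => ⟨c⁻¹ • x, h, by simp [smul_smul, mul_inv_cancel₀ hc]⟩

theorem coe_dualSubmodule_eq_setOf (B : LinearMap.BilinForm K V) (L : Submodule W V) :
    (B.dualSubmodule L : Set V) = {x | ∀ y ∈ L, B x y ∈ range (algebraMap W K)} := by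
  ext
  simp [mem_dualSubmodule, Submodule.mem_one]

theorem mem_dualSubmodule_span_iff (B : LinearMap.BilinForm K V) {s : Set V} {x : V} :
    x ∈ B.dualSubmodule (span W s) ↔ ∀ y ∈ s, B x y ∈ (1 : Submodule W K) := by
  refine ⟨fun h y hy => h y (subset_span hy), fun h y hy => ?_⟩
  induction hy using span_induction with
  | mem y hy => exact h y hy
  | zero => simp
  | add y z _ _ hy hz => rw [map_add]; exact add_mem hy hz
  | smul r y _ hy => rw [LinearMap.map_smul_of_tower]; exact Submodule.smul_mem _ r hy

theorem mul_algebraMap_unit_mem_range_iff (u : Wˣ) (y : K) :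
    y * algebraMap W K u ∈ range (algebraMap W K) ↔ y ∈ range (algebraMap W K) := by
  constructor
  · rintro ⟨r, hr⟩
    exact ⟨r * ↑u⁻¹, by rw [map_mul, hr, mul_assoc, ← map_mul, Units.mul_inv, map_one, mul_one]⟩
  · rintro ⟨r, rfl⟩
    exact ⟨r * u, map_mul _ _ _⟩

variable [IsDomain W] [FaithfulSMul W K]

theorem dualSubmodule_span_smul_range_basis {ι : Type*} [Fintype ι]
    (B : LinearMap.BilinForm K V) (b : Basis ι K V) (σ : Equiv.Perm ι) (u : ι → Wˣ) {q : K}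
    (hBσ : ∀ s, B (b s) (b (σ s)) = algebraMap W K (u s) * q)
    (hB0 : ∀ s t, t ≠ σ s → B (b s) (b t) = 0) {c : K} (hcq : c * q ≠ 0) :
    B.dualSubmodule (span W (c • range b)) = span W ((c * q)⁻¹ • range b) := by
  ext x
  have hBx (t : ι) : B x (b (σ t)) = b.repr x t * (algebraMap W K (u t) * q) := by
    conv_lhs => rw [← b.sum_repr x]
    rw [map_sum, LinearMap.sum_apply, Finset.sum_eq_single t]
    · rw [map_smul, LinearMap.smul_apply, hBσ, smul_eq_mul]
    · intro t' _ ht'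
      rw [map_smul, LinearMap.smul_apply, hB0 _ _ (σ.injective.ne (Ne.symm ht')), smul_zero]
    · simp
  rw [mem_dualSubmodule_span_iff, mem_span_smul_iff (inv_ne_zero hcq), inv_inv,
    Basis.mem_span_iff_repr_mem, ← range_smul, forall_mem_range, ← σ.forall_congr_right]
  refine forall_congr' fun t => ?_
  rw [map_smul, hBx, map_smul, Finsupp.smul_apply, smul_eq_mul, smul_eq_mul, Submodule.mem_one,
    ← Set.mem_range, ← mul_algebraMap_unit_mem_range_iff (u t) (c * q * _)]
  ring_nf

theorem span_smul_range_basis_eq_iff {ι : Type*} [Nonempty ι] (b : Basis ι K V) {c d : K}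
    (hc : c ≠ 0) (hd : d ≠ 0) :
    span W (c • range b) = span W (d • range b) ↔ ∃ u : Wˣ, algebraMap W K u * d = c := by
  constructor
  · intro h
    obtain ⟨i⟩ := ‹Nonempty ι›
    have hquot {c d : K} (hd : d ≠ 0) (hle : span W (c • range b) ≤ span W (d • range b)) :
        d⁻¹ * c ∈ range (algebraMap W K) := by
      have := hle (subset_span (smul_mem_smul_set (mem_range_self i)))
      rw [mem_span_smul_iff hd, smul_smul, Basis.mem_span_iff_repr_mem] at this
      simpa using this i
    obtain ⟨r, hr⟩ := hquot hd h.le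
    obtain ⟨r', hr'⟩ := hquot hc h.ge
    have hrr' : r * r' = 1 := FaithfulSMul.algebraMap_injective W K <| by
      rw [map_mul, hr, hr', map_one]; field_simp
    refine ⟨⟨r, r', hrr', by rw [mul_comm, hrr']⟩, ?_⟩
    rw [Units.val_mk, hr]; field_simp
  · rintro ⟨u, rfl⟩
    have hu : algebraMap W K u • d • range b = (u : W) • d • range b := by
      ext; simp [mem_smul_set, algebraMap_smul]
    rw [mul_smul, hu, span_smul_eq_of_isUnit _ _ u.isUnit]

theorem exists_units_eq_smul_of_span_singleton_eq {x y : V} {a : K}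
    (h : span W {x} = span W {a • y}) : ∃ u : Wˣ, x = (algebraMap W K u * a) • y := by
  have : Module.IsTorsionFree W V := .trans_faithfulSMul W K V
  obtain ⟨z, hz⟩ := span_singleton_eq_span_singleton.mp h
  exact ⟨z⁻¹, by rw [mul_smul, algebraMap_smul, ← hz, ← Units.smul_def, inv_smul_smul]⟩

end Duality

theorem exists_units_algebraMap_eq_zpow_iff {W K : Type*} [CommRing W] [Field K] [Algebra W K]
    [FaithfulSMul W K] {π : W} (hπ : Irreducible π) (k : ℤ) :
    (∃ u : Wˣ, algebraMap W K u = algebraMap W K π ^ k) ↔ k = 0 := by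
  refine ⟨fun ⟨u, hu⟩ => ?_, fun hk => ⟨1, by simp [hk]⟩⟩
  have hpow (n : ℕ) (v : Wˣ) (hv : algebraMap W K v = algebraMap W K π ^ n) : n = 0 := by
    rw [← map_pow] at hv
    by_contra hn
    exact hπ.not_isUnit <| (isUnit_pow_iff hn).mp <|
      FaithfulSMul.algebraMap_injective W K hv ▸ v.isUnit
  rcases Int.eq_nat_or_neg k with ⟨n, rfl | rfl⟩
  · rw [zpow_natCast] at hu
    simp [hpow n u hu]
  · rw [zpow_neg, zpow_natCast] at hu
    simp [hpow n u⁻¹ (by rw [map_units_inv, hu, inv_inv])]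

theorem stmt_7_general (W' : Type*) [CommRing W'] [IsDomain W'] [IsDiscreteValuationRing W']
    (π : W') (hπ : Irreducible π)
    (K : Type*) [Field K] [Algebra W' K] [IsFractionRing W' K]
    (N' : Type*) [AddCommGroup N'] [Module K N'] [Module W' N'] [IsScalarTower W' K N']
    (hdim : Module.finrank K N' = 4)
    -- the fixed full reference lattice M, and a generator ω of ⋀⁴ M
    (M : Submodule W' N')
    (ω : ⋀[K]^4 N') (hω : lambda4 W' K N' M = Submodule.span W' {ω})
    -- the bilinear form [x,y] on ⋀² N' defined by x ∧ y = [x,y] • ω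
    (B : LinearMap.BilinForm K (⋀[K]^2 N'))
    (hB : ∀ x y : ⋀[K]^2 N',
      (x : ExteriorAlgebra K N') * (y : ExteriorAlgebra K N')
        = B x y • (ω : ExteriorAlgebra K N'))
    -- A is a full lattice of height 2i
    (A : Submodule W' N') (hAfg : A.FG) (hAfull : Submodule.span K (A : Set N') = ⊤)
    (i : ℤ)
    (hheight : lambda4 W' K N' A
      = scaleSub W' K (⋀[K]^4 N') ((algebraMap W' K π) ^ (2 * i)) (lambda4 W' K N' M))
    (m : ℤ) :
    -- `π^m ⋀² A` is self-dual iff `m = -i`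
    ({v : ⋀[K]^2 N' |
        ∀ u ∈ scaleSub W' K (⋀[K]^2 N') ((algebraMap W' K π) ^ m) (lambda2 W' K N' A),
          B v u ∈ Set.range (algebraMap W' K)}
      = ↑(scaleSub W' K (⋀[K]^2 N') ((algebraMap W' K π) ^ m) (lambda2 W' K N' A)))
      ↔ m = -i := by
  have : A.IsLattice K := ⟨hAfg, hAfull⟩
  obtain ⟨e, rfl⟩ := exists_basis_span_eq_of_isLattice hdim A
  set c := algebraMap W' K π
  have hc : c ≠ 0 := (map_ne_zero_iff _ (FaithfulSMul.algebraMap_injective W' K)).mpr hπ.ne_zero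
  have h22 : 2 + 2 = Fintype.card (Fin 4) := rfl
  let top : powersetCard (Fin 4) 4 := ⟨Finset.univ, rfl⟩
  obtain ⟨z, hΩ⟩ := exists_units_eq_smul_of_span_singleton_eq (W := W')
    (by rw [← lambda4_span_basis rfl e top, hheight, hω, scaleSub_span, smul_set_singleton])
  choose u hu using exists_bilinForm_exteriorPower_basis_compl e h22 hB hΩ
  have : Nonempty (powersetCard (Fin 4) 2) := ⟨⟨{0, 1}, rfl⟩⟩
  rw [lambda2_span_range, ← exteriorPower.coe_basis, scaleSub_span, ← coe_dualSubmodule_eq_setOf,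
    SetLike.coe_set_eq, dualSubmodule_span_smul_range_basis B _ (compl h22) u hu
      (fun _ _ => bilinForm_exteriorPower_basis_eq_zero e h22 hB hΩ) (by positivity), eq_comm,
    span_smul_range_basis_eq_iff _ (by positivity) (by positivity)]
  calc (∃ u : W'ˣ, algebraMap W' K u * (c ^ m * c ^ (2 * i))⁻¹ = c ^ m)
      ↔ ∃ u : W'ˣ, algebraMap W' K u = c ^ (2 * (m + i)) := by
        refine exists_congr fun u => ?_
        rw [mul_inv_eq_iff_eq_mul₀ (by positivity), ← zpow_add₀ hc, ← zpow_add₀ hc]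
        ring_nf
    _ ↔ 2 * (m + i) = 0 := exists_units_algebraMap_eq_zpow_iff hπ _
    _ ↔ m = -i := by omega

theorem stmt_7 (W' : Type*) [CommRing W'] [IsDomain W'] [IsDiscreteValuationRing W']
    (π : W') (hπ : Irreducible π)
    (K : Type*) [Field K] [Algebra W' K] [IsFractionRing W' K]
    (N' : Type*) [AddCommGroup N'] [Module K N'] [Module W' N'] [IsScalarTower W' K N']
    (hdim : Module.finrank K N' = 4)
    -- the fixed full reference lattice M, and a generator ω of ⋀⁴ M
    (M : Submodule W' N') (hMfg : M.FG) (hMfull : Submodule.span K (M : Set N') = ⊤)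
    (ω : ⋀[K]^4 N') (hω : lambda4 W' K N' M = Submodule.span W' {ω})
    -- the bilinear form [x,y] on ⋀² N' defined by x ∧ y = [x,y] • ω
    (B : LinearMap.BilinForm K (⋀[K]^2 N'))
    (hB : ∀ x y : ⋀[K]^2 N',
      (x : ExteriorAlgebra K N') * (y : ExteriorAlgebra K N')
        = B x y • (ω : ExteriorAlgebra K N'))
    -- A is a full lattice of height 2i
    (A : Submodule W' N') (hAfg : A.FG) (hAfull : Submodule.span K (A : Set N') = ⊤)
    (i : ℤ)
    (hheight : lambda4 W' K N' A
      = scaleSub W' K (⋀[K]^4 N') ((algebraMap W' K π) ^ (2 * i)) (lambda4 W' K N' M))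
    (m : ℤ) :
    -- `π^m ⋀² A` is self-dual iff `m = -i`
    ({v : ⋀[K]^2 N' |
        ∀ u ∈ scaleSub W' K (⋀[K]^2 N') ((algebraMap W' K π) ^ m) (lambda2 W' K N' A),
          B v u ∈ Set.range (algebraMap W' K)}
      = ↑(scaleSub W' K (⋀[K]^2 N') ((algebraMap W' K π) ^ m) (lambda2 W' K N' A)))
      ↔ m = -i :=
  stmt_7_general W' π hπ K N' hdim M ω hω B hB A hAfg hAfull i hheight m
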